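/- arXiv:1008.2014 — 2 statements merged into one kernel-verified Lean document; each statement's English description precedes it below -/
import Mathlib

section
/- For every finite nonempty set X and all elements a, b, c, d, e, f, g of R(X,3), ternary intermolecular recombination satisfies the ternary recombination identity R: ⟦⟦⟦a,b,c⟧,f,g⟧,d,e⟧ + ⟦⟦⟦a,b,g⟧,d,f⟧,c,e⟧ + ⟦⟦⟦a,c,d⟧,b,f⟧,e,g⟧ − ⟦⟦⟦a,c,d⟧,b,g⟧,e,f⟧ + ⟦⟦⟦a,c,d⟧,f,g⟧,b,e⟧ − ⟦⟦⟦a,c,f⟧,b,d⟧,e,g⟧ + ⟦⟦⟦a,c,g⟧,d,f⟧,b,e⟧ − ⟦⟦⟦a,d,f⟧,c,g⟧,b,e⟧ − ⟦⟦⟦a,d,g⟧,b,c⟧,e,f⟧ − ⟦⟦⟦a,f,g⟧,b,c⟧,d,e⟧ + ⟦⟦⟦b,c,d⟧,a,g⟧,e,f⟧ − ⟦⟦a,d,g⟧,⟦b,c,f⟧,e⟧ = 0. -/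
open scoped BigOperators

/-- The tensor-like product of finitely supported functions. -/
noncomputable def tensorPi {n : ℕ} {B : Type*} (f : Fin n → (B →₀ ℚ)) :
    (Fin n → B) →₀ ℚ :=
  haveI := Classical.decEq B
  Finsupp.onFinset (Fintype.piFinset fun j => (f j).support)
    (fun w => ∏ j, f j (w j))
    (fun w hw => by
      rw [Fintype.mem_piFinset]
      intro j
      rw [Finsupp.mem_support_iff]
      intro h0
      exact hw (Finset.prod_eq_zero (Finset.mem_univ j) h0))

/-- `R(X,n)`: the vector space over `ℚ` with basis the set `(X*)^n` of `n`-tuples of elements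
of the free semigroup `X*` on `X`. -/
abbrev RXn (X : Type*) (n : ℕ) : Type _ := (Fin n → FreeSemigroup X) →₀ ℚ

/-- `n`-ary intermolecular recombination: the `ℚ`-multilinear extension of
`⟦a_1,…,a_n⟧ = Σ_{σ ∈ S_n} (a_{σ(1),1}, a_{σ(2),2}, …, a_{σ(n),n})` on basis elements. -/
noncomputable def recomb {X : Type*} {n : ℕ} (a : Fin n → RXn X n) : RXn X n :=
  ∑ σ : Equiv.Perm (Fin n),
    tensorPi fun j => Finsupp.mapDomain (fun w => w j) (a (σ j))

/-- Ternary intermolecular recombination `⟦a,b,c⟧` on `R(X,3)`. -/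
noncomputable def op3 {X : Type*} (a b c : RXn X 3) : RXn X 3 :=
  recomb ![a, b, c]

namespace TernAux
variable {X : Type*}

/-- `j`-th marginal of an element of `R(X,3)`. -/
noncomputable def P (j : Fin 3) (x : RXn X 3) : FreeSemigroup X →₀ ℚ :=
  Finsupp.mapDomain (fun w => w j) x

/-- Pure tensor of three vectors. -/
noncomputable def Q (u v w : FreeSemigroup X →₀ ℚ) : RXn X 3 := tensorPi ![u, v, w]

/-- Total mass of a vector. -/
def mV (u : FreeSemigroup X →₀ ℚ) : ℚ := u.sum fun _ q => q

/-- Total mass of an element of `R(X,3)`. -/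
def m (x : RXn X 3) : ℚ := x.sum fun _ q => q

theorem tensorPi_apply {n : ℕ} {B : Type*} (f : Fin n → (B →₀ ℚ)) (a : Fin n → B) :
    tensorPi f a = ∏ j, f j (a j) := rfl

theorem Q_apply (u v w : FreeSemigroup X →₀ ℚ) (a : Fin 3 → FreeSemigroup X) :
    Q u v w a = u (a 0) * v (a 1) * w (a 2) := by
  simp [Q, tensorPi_apply, Fin.prod_univ_three]

theorem tensorPi_eq_Q (f : Fin 3 → (FreeSemigroup X →₀ ℚ)) :
    tensorPi f = Q (f 0) (f 1) (f 2) := by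
  ext a; simp [Q_apply, tensorPi_apply, Fin.prod_univ_three]

theorem vec3_eq {α : Type*} (x y z : α) (a : Fin 3 → α) :
    (![x, y, z] = a) ↔ (z = a 2 ∧ y = a 1 ∧ x = a 0) := by
  constructor
  · rintro rfl; simp
  · rintro ⟨rfl, rfl, rfl⟩; funext i; fin_cases i <;> rfl

theorem Q_eq_sum (u v w : FreeSemigroup X →₀ ℚ) :
    Q u v w = u.sum fun x p => v.sum fun y q => w.sum fun z r =>
      Finsupp.single ![x, y, z] (p * q * r) := by
  classical
  ext a
  rw [Q_apply]
  by_cases h1 : v (a 1) = 0 <;> by_cases h2 : w (a 2) = 0 <;> by_cases h0 : u (a 0) = 0 <;>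
    simp_all [Finsupp.sum_apply, Finsupp.single_apply, vec3_eq, ite_and,
      Finsupp.sum_ite_eq', Finsupp.mem_support_iff]

theorem Q_zero1 (v w : FreeSemigroup X →₀ ℚ) : Q 0 v w = 0 := by
  ext a; simp [Q_apply]

theorem Q_zero2 (u w : FreeSemigroup X →₀ ℚ) : Q u 0 w = 0 := by
  ext a; simp [Q_apply]

theorem Q_zero3 (u v : FreeSemigroup X →₀ ℚ) : Q u v 0 = 0 := by
  ext a; simp [Q_apply]

theorem Q_add1 (u u' v w : FreeSemigroup X →₀ ℚ) :
    Q (u + u') v w = Q u v w + Q u' v w := by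
  ext a; simp [Q_apply]; ring

theorem Q_add2 (u v v' w : FreeSemigroup X →₀ ℚ) :
    Q u (v + v') w = Q u v w + Q u v' w := by
  ext a; simp [Q_apply]; ring

theorem Q_add3 (u v w w' : FreeSemigroup X →₀ ℚ) :
    Q u v (w + w') = Q u v w + Q u v w' := by
  ext a; simp [Q_apply]; ring

theorem Q_smul1 (q : ℚ) (u v w : FreeSemigroup X →₀ ℚ) :
    Q (q • u) v w = q • Q u v w := by
  ext a; simp [Q_apply]; ring

theorem Q_smul2 (q : ℚ) (u v w : FreeSemigroup X →₀ ℚ) :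
    Q u (q • v) w = q • Q u v w := by
  ext a; simp [Q_apply]; ring

theorem Q_smul3 (q : ℚ) (u v w : FreeSemigroup X →₀ ℚ) :
    Q u v (q • w) = q • Q u v w := by
  ext a; simp [Q_apply]; ring

theorem P_add (j : Fin 3) (x y : RXn X 3) : P j (x + y) = P j x + P j y :=
  Finsupp.mapDomain_add

theorem P_smul (j : Fin 3) (q : ℚ) (x : RXn X 3) : P j (q • x) = q • P j x :=
  Finsupp.mapDomain_smul q x

theorem P_zero (j : Fin 3) : P j (0 : RXn X 3) = 0 :=
  Finsupp.mapDomain_zero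

theorem mV_zero : mV (0 : FreeSemigroup X →₀ ℚ) = 0 := rfl

theorem mV_add (u v : FreeSemigroup X →₀ ℚ) : mV (u + v) = mV u + mV v :=
  Finsupp.sum_add_index' (fun _ => rfl) (fun _ _ _ => rfl)

theorem mV_smul (q : ℚ) (u : FreeSemigroup X →₀ ℚ) : mV (q • u) = q * mV u := by
  rw [mV, Finsupp.sum_smul_index (fun _ => rfl)]
  simp [mV, Finsupp.mul_sum]

theorem mV_single (x : FreeSemigroup X) (p : ℚ) : mV (Finsupp.single x p) = p := by
  simp [mV]

theorem mV_P (j : Fin 3) (x : RXn X 3) : mV (P j x) = m x := by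
  rw [mV, P, Finsupp.sum_mapDomain_index (fun _ => rfl) (fun _ _ _ => rfl)]; rfl

theorem sum_single_smul (u : FreeSemigroup X →₀ ℚ) (c : ℚ) :
    (u.sum fun x p => Finsupp.single x (p * c)) = c • u := by
  conv_rhs => rw [← Finsupp.sum_single u]
  rw [Finsupp.smul_sum]
  exact Finsupp.sum_congr fun x _ => by rw [Finsupp.smul_single, smul_eq_mul, mul_comm]

theorem mapDomain_sum' {α β ι N M : Type*} [AddCommMonoid M] [Zero N] (f : α → β)
    (s : ι →₀ N) (v : ι → N → α →₀ M) :
    Finsupp.mapDomain f (s.sum v) = s.sum fun a b => Finsupp.mapDomain f (v a b) :=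
  map_finsuppSum (Finsupp.mapDomain.addMonoidHom f) _ _

theorem P0_Q (u v w : FreeSemigroup X →₀ ℚ) :
    P 0 (Q u v w) = (mV v * mV w) • u := by
  induction v using Finsupp.induction_linear with
  | zero => simp [Q_zero2, P_zero, mV_zero]
  | add f g hf hg => rw [Q_add2, P_add, hf, hg, mV_add, add_mul, add_smul]
  | single y q =>
    induction w using Finsupp.induction_linear with
    | zero => simp [Q_zero3, P_zero, mV_zero]
    | add f g hf hg => rw [Q_add3, P_add, hf, hg, mV_add, mul_add, add_smul]
    | single z r =>
      classical
      rw [mV_single, mV_single, P, Q_eq_sum]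
      simp only [Finsupp.sum_single_index, mul_zero, zero_mul, Finsupp.single_zero,
        Finsupp.sum_fun_zero]
      rw [mapDomain_sum']
      simp only [Finsupp.mapDomain_single, Matrix.cons_val_zero]
      rw [← sum_single_smul]
      exact Finsupp.sum_congr fun x _ => by congr 1; ring

theorem P1_Q (u v w : FreeSemigroup X →₀ ℚ) :
    P 1 (Q u v w) = (mV u * mV w) • v := by
  induction u using Finsupp.induction_linear with
  | zero => simp [Q_zero1, P_zero, mV_zero]
  | add f g hf hg => rw [Q_add1, P_add, hf, hg, mV_add, add_mul, add_smul]
  | single x p =>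
    induction w using Finsupp.induction_linear with
    | zero => simp [Q_zero3, P_zero, mV_zero]
    | add f g hf hg => rw [Q_add3, P_add, hf, hg, mV_add, mul_add, add_smul]
    | single z r =>
      classical
      rw [mV_single, mV_single, P, Q_eq_sum]
      simp only [Finsupp.sum_single_index, mul_zero, zero_mul, Finsupp.single_zero,
        Finsupp.sum_fun_zero]
      rw [mapDomain_sum']
      simp only [Finsupp.mapDomain_single, Matrix.cons_val_one, Matrix.head_cons]
      rw [← sum_single_smul]
      exact Finsupp.sum_congr fun y _ => by congr 1; ring

theorem P2_Q (u v w : FreeSemigroup X →₀ ℚ) :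
    P 2 (Q u v w) = (mV u * mV v) • w := by
  induction u using Finsupp.induction_linear with
  | zero => simp [Q_zero1, P_zero, mV_zero]
  | add f g hf hg => rw [Q_add1, P_add, hf, hg, mV_add, add_mul, add_smul]
  | single x p =>
    induction v using Finsupp.induction_linear with
    | zero => simp [Q_zero2, P_zero, mV_zero]
    | add f g hf hg => rw [Q_add2, P_add, hf, hg, mV_add, mul_add, add_smul]
    | single y q =>
      classical
      rw [mV_single, mV_single, P, Q_eq_sum]
      simp only [Finsupp.sum_single_index, mul_zero, zero_mul, Finsupp.single_zero,
        Finsupp.sum_fun_zero]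
      rw [mapDomain_sum']
      simp only [Finsupp.mapDomain_single]
      rw [← sum_single_smul]
      exact Finsupp.sum_congr fun z _ => by congr 1; ring

/-- An explicit enumeration of the permutations of `Fin 3`. -/
noncomputable def permList : Fin 6 → Equiv.Perm (Fin 3) :=
  ![⟨![0,1,2], ![0,1,2], by decide, by decide⟩,
    ⟨![0,2,1], ![0,2,1], by decide, by decide⟩,
    ⟨![1,0,2], ![1,0,2], by decide, by decide⟩,
    ⟨![1,2,0], ![2,0,1], by decide, by decide⟩,
    ⟨![2,0,1], ![1,2,0], by decide, by decide⟩,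
    ⟨![2,1,0], ![2,1,0], by decide, by decide⟩]

theorem permList_bij : Function.Bijective permList := by decide

theorem perm_sum {M : Type*} [AddCommMonoid M] (F : Equiv.Perm (Fin 3) → M) :
    (∑ σ, F σ) = F (permList 0) + F (permList 1) + F (permList 2) + F (permList 3)
      + F (permList 4) + F (permList 5) := by
  rw [← Fintype.sum_bijective permList permList_bij _ F (fun i => rfl), Fin.sum_univ_six]

theorem op3_eq (a b c : RXn X 3) :
    op3 a b c =
      Q (P 0 a) (P 1 b) (P 2 c) + Q (P 0 a) (P 1 c) (P 2 b) +
      Q (P 0 b) (P 1 a) (P 2 c) + Q (P 0 b) (P 1 c) (P 2 a) +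
      Q (P 0 c) (P 1 a) (P 2 b) + Q (P 0 c) (P 1 b) (P 2 a) := by
  rw [op3, recomb, perm_sum]
  simp only [tensorPi_eq_Q]
  rfl

end TernAux

set_option maxHeartbeats 2000000 in
open TernAux in
/-- ternary intermolecular recombination satisfies the ternary
recombination identity `R`. -/
theorem ternary_recombination_identity {X : Type*} [Fintype X] [Nonempty X]
    (a b c d e f g : RXn X 3) :
    op3 (op3 (op3 a b c) f g) d e
      + op3 (op3 (op3 a b g) d f) c e
      + op3 (op3 (op3 a c d) b f) e g
      - op3 (op3 (op3 a c d) b g) e f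
      + op3 (op3 (op3 a c d) f g) b e
      - op3 (op3 (op3 a c f) b d) e g
      + op3 (op3 (op3 a c g) d f) b e
      - op3 (op3 (op3 a d f) c g) b e
      - op3 (op3 (op3 a d g) b c) e f
      - op3 (op3 (op3 a f g) b c) d e
      + op3 (op3 (op3 b c d) a g) e f
      - op3 (op3 a d g) (op3 b c f) e = 0 := by
  simp only [op3_eq, P_add, P_smul, P0_Q, P1_Q, P2_Q, mV_add, mV_smul, mV_P,
    Q_add1, Q_add2, Q_add3, Q_smul1, Q_smul2, Q_smul3, smul_smul, smul_add]
  module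
end

section
/- For every finite nonempty set X and all elements a, b, c, d, e, f, g of R(X,3), ternary intermolecular recombination satisfies the identity ⟦⟦a,b,c⟧,⟦d,e,f⟧,g⟧ = ⟦⟦⟦a,d,e⟧,f,c⟧,b,g⟧ + ⟦⟦⟦a,d,c⟧,b,f⟧,e,g⟧ + ⟦⟦⟦a,e,b⟧,d,f⟧,g,c⟧ − ⟦⟦⟦a,e,b⟧,d,c⟧,g,f⟧ + ⟦⟦⟦a,e,b⟧,f,c⟧,d,g⟧ − ⟦⟦⟦a,e,f⟧,d,b⟧,g,c⟧ + ⟦⟦⟦a,e,c⟧,b,f⟧,d,g⟧ − ⟦⟦⟦a,b,f⟧,e,c⟧,d,g⟧ − ⟦⟦⟦a,b,c⟧,d,e⟧,g,f⟧ − ⟦⟦⟦a,f,c⟧,d,e⟧,b,g⟧ + ⟦⟦⟦d,e,b⟧,a,c⟧,g,f⟧, which expresses any degree-7 monomial in the second association type as a linear combination of monomials in the first association type. -/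
open Finset


open scoped BigOperators

noncomputable def SS {B : Type*} (u : B →₀ ℚ) : ℚ := u.sum fun _ q => q

section lemmas
variable {n : ℕ} {B : Type*}

theorem sum_perm3 {M : Type*} [AddCommMonoid M] (f : Equiv.Perm (Fin 3) → M) :
    ∑ σ : Equiv.Perm (Fin 3), f σ
      = f 1 + f (Equiv.swap 0 1) + f (Equiv.swap 0 2) + f (Equiv.swap 1 2)
        + f (finRotate 3) + f (finRotate 3)⁻¹ := by
  rw [show (Finset.univ : Finset (Equiv.Perm (Fin 3)))
      = {1, Equiv.swap 0 1, Equiv.swap 0 2, Equiv.swap 1 2, finRotate 3, (finRotate 3)⁻¹}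
      from by decide]
  rw [Finset.sum_insert (by decide), Finset.sum_insert (by decide),
    Finset.sum_insert (by decide), Finset.sum_insert (by decide),
    Finset.sum_insert (by decide), Finset.sum_singleton]
  abel

lemma tensorPi_apply (f : Fin n → (B →₀ ℚ)) (w : Fin n → B) :
    tensorPi f w = ∏ j, f j (w j) := rfl

lemma tensorPi_support_subset [DecidableEq B] (f : Fin n → (B →₀ ℚ)) :
    (tensorPi f).support ⊆ Fintype.piFinset fun j => (f j).support := by
  intro w hw
  rw [Fintype.mem_piFinset]
  intro j
  rw [Finsupp.mem_support_iff]
  intro h0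
  rw [Finsupp.mem_support_iff, tensorPi_apply] at hw
  exact hw (Finset.prod_eq_zero (Finset.mem_univ j) h0)

lemma SS_mapDomain {C : Type*} (h : B → C) (u : B →₀ ℚ) :
    SS (Finsupp.mapDomain h u) = SS u := by
  rw [SS, SS, Finsupp.sum_mapDomain_index (fun _ => rfl) (fun _ _ _ => rfl)]

lemma SS_add (u v : B →₀ ℚ) : SS (u + v) = SS u + SS v := by
  rw [SS, SS, SS, Finsupp.sum_add_index' (fun _ => rfl) (fun _ _ _ => rfl)]

lemma SS_tensorPi (f : Fin n → (B →₀ ℚ)) :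
    SS (tensorPi f) = ∏ j, SS (f j) := by
  classical
  have h1 : SS (tensorPi f) = ∑ w ∈ (tensorPi f).support, ∏ j, f j (w j) := by
    rw [SS, Finsupp.sum]
    exact Finset.sum_congr rfl fun w _ => rfl
  rw [h1, Finset.sum_subset (tensorPi_support_subset f)
    (fun w _ hw => by
      have h0 : tensorPi f w = 0 := by
        by_contra hne; exact hw (Finsupp.mem_support_iff.mpr hne)
      rw [← tensorPi_apply, h0])]
  rw [← Finset.prod_univ_sum]
  exact Finset.prod_congr rfl fun j _ => rfl

lemma mapDomain_tensorPi (f : Fin n → (B →₀ ℚ)) (j : Fin n) :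
    Finsupp.mapDomain (fun w => w j) (tensorPi f)
      = (∏ k ∈ Finset.univ.erase j, SS (f k)) • f j := by
  classical
  ext y
  rw [Finsupp.mapDomain, Finsupp.sum_apply, Finsupp.sum]
  have h1 : ∀ w ∈ (tensorPi f).support,
      (Finsupp.single (w j) (tensorPi f w)) y
        = ∏ k, (fun (k : Fin n) (x : B) =>
            if k = j then (if x = y then f k x else 0) else f k x) k (w k) := by
    intro w _
    rw [Finsupp.single_apply]
    by_cases h : w j = y
    · subst h
      simp only [if_pos rfl, tensorPi_apply]
      exact Finset.prod_congr rfl fun k _ => by by_cases hk : k = j <;> simp [hk]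
    · rw [if_neg h]
      exact (Finset.prod_eq_zero (Finset.mem_univ j) (by simp [h])).symm
  rw [Finset.sum_congr rfl h1]
  rw [Finset.sum_subset (tensorPi_support_subset f) (fun w _ hw => ?_)]
  · have key := Finset.prod_univ_sum (fun k : Fin n => (f k).support)
      (fun (k : Fin n) (x : B) => if k = j then (if x = y then f k x else 0) else f k x)
    rw [← key]
    have h2 : ∀ k : Fin n, (∑ x ∈ (f k).support,
        (fun (k : Fin n) (x : B) =>
            if k = j then (if x = y then f k x else 0) else f k x) k x)
        = if k = j then f j y else SS (f k) := by
      intro k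
      by_cases hk : k = j
      · subst hk
        simp only [eq_self_iff_true, if_true]
        rw [Finset.sum_ite_eq' (f k).support y (f k)]
        by_cases hy : y ∈ (f k).support
        · rw [if_pos hy]
        · rw [if_neg hy, (Finsupp.notMem_support_iff.mp hy)]
      · simp only [if_neg hk]
        rfl
    rw [Finset.prod_congr rfl fun k _ => h2 k,
      ← Finset.mul_prod_erase Finset.univ _ (Finset.mem_univ j), if_pos rfl]
    rw [Finsupp.smul_apply, smul_eq_mul, mul_comm]
    congr 1
    exact Finset.prod_congr rfl fun k hk => if_neg (Finset.mem_erase.mp hk).1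
  · have h0 : tensorPi f w = 0 := by
      by_contra hne; exact hw (Finsupp.mem_support_iff.mpr hne)
    by_cases hwj : w j = y
    · rw [show (∏ k, (fun (k : Fin n) (x : B) =>
            if k = j then (if x = y then f k x else 0) else f k x) k (w k))
          = tensorPi f w from by
        rw [tensorPi_apply]
        exact Finset.prod_congr rfl fun k _ => by by_cases hk : k = j <;> simp [hk, hwj], h0]
    · exact Finset.prod_eq_zero (Finset.mem_univ j) (by simp [hwj])

end lemmas

section op3lemmas
variable {X : Type*}

/-- marginal -/
noncomputable def mrg (a : RXn X 3) (j : Fin 3) : FreeSemigroup X →₀ ℚ :=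
  Finsupp.mapDomain (fun t => t j) a

/-- pure tensor term -/
noncomputable def tp (u v w : RXn X 3) : RXn X 3 :=
  tensorPi ![mrg u 0, mrg v 1, mrg w 2]

lemma op3_expand (p q r : RXn X 3) :
    op3 p q r = tp p q r + tp q p r + tp r q p + tp p r q + tp q r p + tp r p q := by
  rw [op3, recomb, sum_perm3]
  have e : ∀ σ : Equiv.Perm (Fin 3),
      (tensorPi fun j => Finsupp.mapDomain (fun w => w j) (![p, q, r] (σ j)))
        = tp (![p, q, r] (σ 0)) (![p, q, r] (σ 1)) (![p, q, r] (σ 2)) := by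
    intro σ
    rw [tp]
    congr 1
    funext j
    fin_cases j <;> rfl
  rw [e 1, e (Equiv.swap 0 1), e (Equiv.swap 0 2), e (Equiv.swap 1 2),
    e (finRotate 3), e (finRotate 3)⁻¹]
  rfl

lemma SS_tp (u v w : RXn X 3) : SS (tp u v w) = SS u * SS v * SS w := by
  rw [tp, SS_tensorPi, Fin.prod_univ_three]
  show SS (mrg u 0) * SS (mrg v 1) * SS (mrg w 2) = _
  rw [mrg, mrg, mrg, SS_mapDomain, SS_mapDomain, SS_mapDomain]

lemma SS_op3 (p q r : RXn X 3) : SS (op3 p q r) = 6 * (SS p * SS q * SS r) := by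
  rw [op3_expand, SS_add, SS_add, SS_add, SS_add, SS_add,
    SS_tp, SS_tp, SS_tp, SS_tp, SS_tp, SS_tp]
  ring

lemma mrg_tp (u v w : RXn X 3) (j : Fin 3) :
    mrg (tp u v w) j
      = (∏ k ∈ Finset.univ.erase j, SS (![u, v, w] k)) • mrg (![u, v, w] j) j := by
  rw [mrg, tp, mapDomain_tensorPi]
  congr 1
  · refine Finset.prod_congr rfl fun k _ => ?_
    fin_cases k <;> simp [mrg, SS_mapDomain]
  · fin_cases j <;> rfl

lemma mrg_add (u v : RXn X 3) (j : Fin 3) :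
    mrg (u + v) j = mrg u j + mrg v j := Finsupp.mapDomain_add

lemma mrg_op3 (p q r : RXn X 3) (j : Fin 3) :
    mrg (op3 p q r) j
      = (2 * (SS q * SS r)) • mrg p j + (2 * (SS p * SS r)) • mrg q j
        + (2 * (SS p * SS q)) • mrg r j := by
  rw [op3_expand, mrg_add, mrg_add, mrg_add, mrg_add, mrg_add,
    mrg_tp, mrg_tp, mrg_tp, mrg_tp, mrg_tp, mrg_tp]
  have pe0 : ∀ F : Fin 3 → ℚ, ∏ k ∈ Finset.univ.erase (0 : Fin 3), F k = F 1 * F 2 := by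
    intro F
    rw [show Finset.univ.erase (0 : Fin 3) = {1, 2} from by decide,
      Finset.prod_insert (by decide), Finset.prod_singleton]
  have pe1 : ∀ F : Fin 3 → ℚ, ∏ k ∈ Finset.univ.erase (1 : Fin 3), F k = F 0 * F 2 := by
    intro F
    rw [show Finset.univ.erase (1 : Fin 3) = {0, 2} from by decide,
      Finset.prod_insert (by decide), Finset.prod_singleton]
  have pe2 : ∀ F : Fin 3 → ℚ, ∏ k ∈ Finset.univ.erase (2 : Fin 3), F k = F 0 * F 1 := by
    intro F
    rw [show Finset.univ.erase (2 : Fin 3) = {0, 1} from by decide,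
      Finset.prod_insert (by decide), Finset.prod_singleton]
  have hj : j = 0 ∨ j = 1 ∨ j = 2 := by revert j; decide
  rcases hj with rfl | rfl | rfl <;>
    simp only [pe0, pe1, pe2, Matrix.cons_val_zero, Matrix.cons_val_one, Matrix.head_cons,
      Matrix.cons_val_two, Matrix.tail_cons, Matrix.cons_val_fin_one] <;>
    module

lemma op3_apply (p q r : RXn X 3) (t : Fin 3 → FreeSemigroup X) :
    op3 p q r t
      = mrg p 0 (t 0) * mrg q 1 (t 1) * mrg r 2 (t 2)
      + mrg q 0 (t 0) * mrg p 1 (t 1) * mrg r 2 (t 2)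
      + mrg r 0 (t 0) * mrg q 1 (t 1) * mrg p 2 (t 2)
      + mrg p 0 (t 0) * mrg r 1 (t 1) * mrg q 2 (t 2)
      + mrg q 0 (t 0) * mrg r 1 (t 1) * mrg p 2 (t 2)
      + mrg r 0 (t 0) * mrg p 1 (t 1) * mrg q 2 (t 2) := by
  have htp : ∀ u v w : RXn X 3,
      tp u v w t = mrg u 0 (t 0) * mrg v 1 (t 1) * mrg w 2 (t 2) := by
    intro u v w
    rw [tp, tensorPi_apply, Fin.prod_univ_three]
    rfl
  rw [op3_expand]
  simp only [Finsupp.add_apply, htp]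

end op3lemmas

/-- ternary intermolecular recombination satisfies the identity expressing
any degree-7 monomial of the second association type as a linear combination of monomials
of the first association type. -/
theorem second_type_rewriting_identity {X : Type*} [Fintype X] [Nonempty X]
    (a b c d e f g : RXn X 3) :
    op3 (op3 a b c) (op3 d e f) g
      = op3 (op3 (op3 a d e) f c) b g
        + op3 (op3 (op3 a d c) b f) e g
        + op3 (op3 (op3 a e b) d f) g c
        - op3 (op3 (op3 a e b) d c) g f
        + op3 (op3 (op3 a e b) f c) d g
        - op3 (op3 (op3 a e f) d b) g c
        + op3 (op3 (op3 a e c) b f) d g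
        - op3 (op3 (op3 a b f) e c) d g
        - op3 (op3 (op3 a b c) d e) g f
        - op3 (op3 (op3 a f c) d e) b g
        + op3 (op3 (op3 d e b) a c) g f := by
  ext t
  simp only [Finsupp.add_apply, Finsupp.sub_apply, op3_apply, mrg_op3, SS_op3,
    Finsupp.smul_apply, smul_eq_mul]
  ring
end
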